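/- Let r_q be the unique zero in [1,∞) of P_q(x) = (x-1)F_q(x) - |a_q|, where q is the largest index with a_q ≠ 0. Then r_q > max(1, ρ), where ρ is the unique positive root of Q(x) = x^q - Σ_{j=1}^q |a_j| x^{q-j}. -/

import Mathlib

/-!
Write `Q = x ^ q - ∑ |a_j| x ^ (q - j)`, so that `Q(x) = x F_q(x) - |a_q|` and
`P_q(x) = Q(x) - F_q(x)`. At the zero `r_q` of `P_q` we have `(r_q - 1) F_q(r_q) = |a_q| > 0`,
which forces `r_q > 1` and `Q(r_q) = F_q(r_q) > 0`. Since `Q(x) / x ^ q = 1 - ∑ |a_j| x ^ (-j)`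
is nondecreasing on `(0, ∞)` and vanishes at `ρ`, positivity of `Q(r_q)` gives `r_q > ρ`.
-/

open Finset

noncomputable section

def cauchyPoly (c : ℕ → ℝ) (q : ℕ) (x : ℝ) : ℝ :=
  x ^ q - ∑ j ∈ Icc 1 q, c j * x ^ (q - j)

theorem cauchyPoly_succ (c : ℕ → ℝ) (k : ℕ) (x : ℝ) :
    cauchyPoly c (k + 1) x = x * cauchyPoly c k x - c (k + 1) := by
  have hsum : ∑ j ∈ Icc 1 k, c j * x ^ (k + 1 - j) = x * ∑ j ∈ Icc 1 k, c j * x ^ (k - j) := by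
    rw [mul_sum]
    refine sum_congr rfl fun j hj => ?_
    rw [Nat.sub_add_comm (mem_Icc.mp hj).2, pow_succ]
    ring
  rw [cauchyPoly, cauchyPoly, sum_Icc_succ_top (by omega), hsum, Nat.sub_self, pow_zero]
  ring

/-- Cleared of denominators: `x ↦ x ^ (-q) * cauchyPoly c q x` is monotone on `(0, ∞)`. -/
theorem pow_mul_cauchyPoly_le {c : ℕ → ℝ} (hc : ∀ j, 0 ≤ c j) (q : ℕ) {x y : ℝ}
    (hx : 0 ≤ x) (hxy : x ≤ y) :
    y ^ q * cauchyPoly c q x ≤ x ^ q * cauchyPoly c q y := by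
  have hterm : ∀ j ∈ Icc 1 q, c j * (x ^ q * y ^ (q - j)) ≤ c j * (y ^ q * x ^ (q - j)) := by
    intro j hj
    have hjq : j ≤ q := (mem_Icc.mp hj).2
    refine mul_le_mul_of_nonneg_left ?_ (hc j)
    calc x ^ q * y ^ (q - j) = x ^ (q - j) * (x ^ j * y ^ (q - j)) := by
          rw [← mul_assoc, pow_sub_mul_pow x hjq]
      _ ≤ x ^ (q - j) * (y ^ j * y ^ (q - j)) := by have := hx.trans hxy; gcongr
      _ = y ^ q * x ^ (q - j) := by rw [← pow_add, Nat.add_sub_cancel' hjq, mul_comm]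
  have hsum := sum_le_sum hterm
  simp only [cauchyPoly, mul_sub, mul_sum]
  simp only [mul_left_comm _ (c _)] at hsum ⊢
  linarith [mul_comm (x ^ q) (y ^ q)]

theorem lt_of_cauchyPoly_pos {c : ℕ → ℝ} (hc : ∀ j, 0 ≤ c j) {q : ℕ} {x y : ℝ}
    (hy : cauchyPoly c q y = 0) (hx : 0 < x) (hQx : 0 < cauchyPoly c q x) : y < x := by
  by_contra! hxy
  have hle := pow_mul_cauchyPoly_le hc q hx.le hxy
  rw [hy, mul_zero] at hle
  exact hle.not_gt (mul_pos (pow_pos (hx.trans_le hxy) q) hQx)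

end

theorem rq_gt_max_one_rho_general (q : ℕ) (a : ℕ → ℂ) (hq : a q ≠ 0) (hq1 : 1 ≤ q)
    (ρ : ℝ)
    (hρ : ρ ^ q - ∑ j ∈ Finset.Icc 1 q, ‖a j‖ * ρ ^ (q - j) = 0)
    (rq : ℝ) (hrq1 : 1 ≤ rq)
    (hrq : (rq - 1) * (rq ^ (q - 1) -
        ∑ j ∈ Finset.Icc 1 (q - 1), ‖a j‖ * rq ^ (q - 1 - j))
        - ‖a q‖ = 0) :
    rq > max 1 ρ := by
  obtain ⟨k, rfl⟩ := Nat.exists_eq_add_of_le' hq1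
  set c : ℕ → ℝ := fun j => ‖a j‖
  have hc : ∀ j, 0 ≤ c j := fun j => norm_nonneg _
  have hA : 0 < c (k + 1) := norm_pos_iff.mpr hq
  change cauchyPoly c (k + 1) ρ = 0 at hρ
  change (rq - 1) * cauchyPoly c k rq - c (k + 1) = 0 at hrq
  have hrq_gt_one : 1 < rq := by
    refine hrq1.lt_of_ne fun h => ?_
    rw [← h, sub_self, zero_mul] at hrq
    linarith
  have hF : 0 < cauchyPoly c k rq :=
    pos_of_mul_pos_right (by linarith : 0 < (rq - 1) * cauchyPoly c k rq) (by linarith)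
  have hQ : 0 < cauchyPoly c (k + 1) rq := by
    rw [cauchyPoly_succ]
    linarith
  exact max_lt hrq_gt_one (lt_of_cauchyPoly_pos hc hρ (by linarith) hQ)

theorem rq_gt_max_one_rho (n q : ℕ) (a : ℕ → ℂ) (hq : a q ≠ 0) (hq1 : 1 ≤ q)
    (ha0 : ∀ j > q, a j = 0)
    (ρ : ℝ) (hρpos : 0 < ρ)
    (hρ : ρ ^ q - ∑ j ∈ Finset.Icc 1 q, ‖a j‖ * ρ ^ (q - j) = 0)
    (rq : ℝ) (hrq1 : 1 ≤ rq)
    (hrq : (rq - 1) * (rq ^ (q - 1) -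
        ∑ j ∈ Finset.Icc 1 (q - 1), ‖a j‖ * rq ^ (q - 1 - j))
        - ‖a q‖ = 0)
    (hrquniq : ∀ y : ℝ, 1 ≤ y →
      (y - 1) * (y ^ (q - 1) -
        ∑ j ∈ Finset.Icc 1 (q - 1), ‖a j‖ * y ^ (q - 1 - j))
        - ‖a q‖ = 0 → y = rq) :
    rq > max 1 ρ :=
  rq_gt_max_one_rho_general q a hq hq1 ρ hρ rq hrq1 hrq
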